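/- arXiv:1701.02210 — 2 statements merged into one kernel-verified Lean document; each statement's English description precedes it below -/
import Mathlib

section
/- Let S be a 2×2 matrix function on the unit disk whose entries are Schur functions, such that det S ≢ 0 and the boundary values of S are unitary matrices a.e. on an arc γ of the unit circle. Then the entry s₂₂ admits a pseudocontinuation of bounded type across γ, given explicitly by s̃₂₂(ζ) = conj(s₁₁(1/conj(ζ))) / conj(det S(1/conj(ζ))) for ζ in the exterior disk. -/
open MeasureTheory Filter Complex Set Matrix

noncomputable section

/-- The open unit disk. -/
def unitDisk : Set ℂ := {z : ℂ | ‖z‖ < 1}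

/-- The exterior of the closed unit disk. -/
def extDisk : Set ℂ := {z : ℂ | 1 < ‖z‖}

/-- Point on the unit circle with angle `θ`. -/
def circlePt (θ : ℝ) : ℂ := Complex.exp (θ * Complex.I)

/-- One full period of angles, parametrizing the circle 𝕋. -/
def circleSet : Set ℝ := Set.Ioc 0 (2 * Real.pi)

/-- `RadLim f θ w` : the radial (nontangential) boundary value of `f` (analytic in the
disk) at the boundary point `circlePt θ` exists and equals `w`. -/
def RadLim (f : ℂ → ℂ) (θ : ℝ) (w : ℂ) : Prop :=
  Filter.Tendsto (fun r : ℝ => f ((r : ℂ) * circlePt θ))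
    (nhdsWithin 1 (Set.Iio 1)) (nhds w)

/-- `RadLimExt f θ w` : the radial boundary value of `f` (analytic in the exterior disk)
at the boundary point `circlePt θ`, taken from outside. -/
def RadLimExt (f : ℂ → ℂ) (θ : ℝ) (w : ℂ) : Prop :=
  Filter.Tendsto (fun r : ℝ => f ((r : ℂ) * circlePt θ))
    (nhdsWithin 1 (Set.Ioi 1)) (nhds w)

/-- A Schur function: analytic on the unit disk and bounded by 1 in modulus. -/
def SchurFn (f : ℂ → ℂ) : Prop :=
  DifferentiableOn ℂ f unitDisk ∧ ∀ z ∈ unitDisk, ‖f z‖ ≤ 1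

/-- The Nevanlinna class on a domain `Ω` : quotients of two bounded (contractive)
analytic functions, with not-identically-zero denominator. -/
def NevOn (Ω : Set ℂ) (f : ℂ → ℂ) : Prop :=
  ∃ f₁ f₂ : ℂ → ℂ, DifferentiableOn ℂ f₁ Ω ∧ DifferentiableOn ℂ f₂ Ω ∧
    (∀ z ∈ Ω, ‖f₁ z‖ ≤ 1) ∧ (∀ z ∈ Ω, ‖f₂ z‖ ≤ 1) ∧
    (∃ z ∈ Ω, f₂ z ≠ 0) ∧ (∀ z ∈ Ω, f₂ z ≠ 0 → f z = f₁ z / f₂ z)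

/-- An arc of the unit circle, described by its set of angles (one full period is
`Set.Ioo 0 (2π)` up to a null set, so the case γ = 𝕋 is not excluded). -/
def IsArc (γ : Set ℝ) : Prop :=
  ∃ a b : ℝ, 0 ≤ a ∧ a < b ∧ b ≤ 2 * Real.pi ∧ γ = Set.Ioo a b

/-- `f` admits a pseudocontinuation of bounded type across the arc with angle set `γ` :
there is a Nevanlinna function on the exterior disk whose boundary values agree with
those of `f` a.e. on `γ`. -/
def PCArc (f : ℂ → ℂ) (γ : Set ℝ) : Prop :=
  ∃ ft : ℂ → ℂ, NevOn extDisk ft ∧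
    ∀ᵐ θ ∂(volume.restrict γ), ∃ w : ℂ, RadLim f θ w ∧ RadLimExt ft θ w

/-- The boundary values of `f` exist and are unimodular a.e. on `γ`. -/
def UnimodularAEOn (f : ℂ → ℂ) (γ : Set ℝ) : Prop :=
  ∀ᵐ θ ∂(volume.restrict γ), ∃ w : ℂ, RadLim f θ w ∧ ‖w‖ = 1

/-- The boundary values of the 2×2 matrix function `S` exist and are unitary a.e. on `γ`. -/
def UnitaryAEOn (S : ℂ → Matrix (Fin 2) (Fin 2) ℂ) (γ : Set ℝ) : Prop :=
  ∀ᵐ θ ∂(volume.restrict γ), ∃ W : Matrix (Fin 2) (Fin 2) ℂ,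
    (∀ i j, RadLim (fun z => S z i j) θ (W i j)) ∧ Wᴴ * W = 1

/-- An outer function on the unit disk (normalized, with multiplicative constant 1):
`f z = exp (∫_𝕋 (t+z)/(t-z) φ(t) dm(t))` for some real integrable boundary data `φ`,
`m` being normalized Lebesgue measure on 𝕋. -/
def IsOuter (f : ℂ → ℂ) : Prop :=
  ∃ φ : ℝ → ℝ, IntegrableOn φ circleSet ∧
    ∀ z ∈ unitDisk, f z =
      Complex.exp (∫ θ in circleSet,
        ((circlePt θ + z) / (circlePt θ - z)) * (φ θ : ℂ) / (2 * Real.pi))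

/-! On the arc, a boundary value `W` of `S` is unitary, so `W⁻¹ = Wᴴ` and Cramer's rule give
`w₂₂ = conj w₁₁ / conj (det W)`. The right-hand side is the radial limit from outside of the
reflection `conj s₁₁(1/ζ̄) / conj det S(1/ζ̄)`, and this reflection is a quotient of two bounded
holomorphic functions on the exterior disk, hence of Nevanlinna class there. -/

def circleReflect (f : ℂ → ℂ) (ζ : ℂ) : ℂ := (starRingEnd ℂ) (f (1 / (starRingEnd ℂ) ζ))

lemma isOpen_unitDisk : IsOpen unitDisk := isOpen_lt continuous_norm continuous_const

lemma one_div_conj_mem_unitDisk {ζ : ℂ} (hζ : ζ ∈ extDisk) : 1 / (starRingEnd ℂ) ζ ∈ unitDisk := by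
  have h : (1 : ℝ) < ‖ζ‖ := hζ
  show ‖1 / (starRingEnd ℂ) ζ‖ < 1
  rw [norm_div, norm_one, RCLike.norm_conj]
  exact (div_lt_one (one_pos.trans h)).2 h

lemma one_div_conj_mem_extDisk {z : ℂ} (hz : z ∈ unitDisk) (hz₀ : z ≠ 0) :
    1 / (starRingEnd ℂ) z ∈ extDisk := by
  show 1 < ‖1 / (starRingEnd ℂ) z‖
  rw [norm_div, norm_one, RCLike.norm_conj]
  exact (one_lt_div (norm_pos_iff.2 hz₀)).2 hz

lemma one_div_conj_ofReal_mul_circlePt (r θ : ℝ) :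
    1 / (starRingEnd ℂ) ((r : ℂ) * circlePt θ) = ((r⁻¹ : ℝ) : ℂ) * circlePt θ := by
  rw [_root_.map_mul, Complex.conj_ofReal, circlePt, ← Complex.exp_conj, _root_.map_mul,
    Complex.conj_ofReal, Complex.conj_I, one_div, mul_inv, ← Complex.exp_neg, mul_neg, neg_neg,
    Complex.ofReal_inv]

lemma DifferentiableOn.circleReflect {f : ℂ → ℂ} (hf : DifferentiableOn ℂ f unitDisk) :
    DifferentiableOn ℂ (circleReflect f) extDisk := by
  intro ζ hζ
  have hζ₀ : ζ ≠ 0 := by rintro rfl; exact absurd hζ (by simp [extDisk])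
  have hf' : DifferentiableAt ℂ f ((starRingEnd ℂ) ζ⁻¹) := by
    refine hf.differentiableAt (isOpen_unitDisk.mem_nhds ?_)
    simpa [map_inv₀] using one_div_conj_mem_unitDisk hζ
  -- `circleReflect f = (conj ∘ f ∘ conj) ∘ inv`, and `conj ∘ f ∘ conj` is holomorphic where `f` is.
  have hg : DifferentiableAt ℂ ((starRingEnd ℂ) ∘ f ∘ (starRingEnd ℂ)) ζ⁻¹ := by
    simpa [map_inv₀] using hf'.conj_conj
  have h := (hg.comp ζ (differentiableAt_inv hζ₀)).differentiableWithinAt (s := extDisk)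
  refine h.congr (fun w _ => ?_) ?_ <;> simp [_root_.circleReflect, Function.comp_def, map_inv₀]

lemma norm_circleReflect_le {f : ℂ → ℂ} {C : ℝ} (hf : ∀ z ∈ unitDisk, ‖f z‖ ≤ C)
    {ζ : ℂ} (hζ : ζ ∈ extDisk) : ‖circleReflect f ζ‖ ≤ C := by
  rw [circleReflect, RCLike.norm_conj]
  exact hf _ (one_div_conj_mem_unitDisk hζ)

lemma RadLim.circleReflect {f : ℂ → ℂ} {θ : ℝ} {w : ℂ} (hf : RadLim f θ w) :
    RadLimExt (circleReflect f) θ ((starRingEnd ℂ) w) := by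
  have hinv : Tendsto (fun r : ℝ => r⁻¹) (nhdsWithin 1 (Set.Ioi 1)) (nhdsWithin 1 (Set.Iio 1)) := by
    refine tendsto_nhdsWithin_iff.2 ⟨?_, ?_⟩
    · simpa using ((continuousAt_inv₀ (one_ne_zero (α := ℝ))).tendsto).mono_left nhdsWithin_le_nhds
    · filter_upwards [self_mem_nhdsWithin] with r hr
      exact inv_lt_one_of_one_lt₀ (Set.mem_Ioi.1 hr)
  have h := (Complex.continuous_conj.tendsto w).comp (hf.comp hinv)
  unfold RadLimExt
  simpa only [_root_.circleReflect, one_div_conj_ofReal_mul_circlePt, Function.comp_def] using h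

lemma RadLim.det {n : Type*} [Fintype n] [DecidableEq n] {S : ℂ → Matrix n n ℂ} {θ : ℝ}
    {W : Matrix n n ℂ} (hS : ∀ i j, RadLim (fun z => S z i j) θ (W i j)) :
    RadLim (fun z => (S z).det) θ W.det :=
  (continuous_id.matrix_det.tendsto W).comp (tendsto_pi_nhds.2 fun i => tendsto_pi_nhds.2 (hS i))

lemma norm_det_fin_two_le {A : Matrix (Fin 2) (Fin 2) ℂ} (hA : ∀ i j, ‖A i j‖ ≤ 1) :
    ‖A.det‖ ≤ 2 := by
  rw [Matrix.det_fin_two]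
  refine (norm_sub_le _ _).trans ?_
  rw [norm_mul, norm_mul]
  nlinarith [hA 0 0, hA 0 1, hA 1 0, hA 1 1, norm_nonneg (A 0 0), norm_nonneg (A 1 1),
    norm_nonneg (A 0 1), norm_nonneg (A 1 0)]

lemma Matrix.conj_det_mul_det_of_conjTranspose_mul_self {n : Type*} [Fintype n] [DecidableEq n]
    {W : Matrix n n ℂ} (hW : Wᴴ * W = 1) : (starRingEnd ℂ) W.det * W.det = 1 := by
  simpa [Matrix.det_mul, Matrix.det_conjTranspose] using congrArg Matrix.det hW

/-- For a unitary `W`, `W⁻¹ = Wᴴ` and Cramer's rule give `W 1 1 = conj (W 0 0) · det W`,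
while `|det W| = 1`. -/
lemma Matrix.conj_div_conj_det_of_conjTranspose_mul_self {W : Matrix (Fin 2) (Fin 2) ℂ}
    (hW : Wᴴ * W = 1) : (starRingEnd ℂ) (W 0 0) / (starRingEnd ℂ) W.det = W 1 1 := by
  have hdet := Matrix.conj_det_mul_det_of_conjTranspose_mul_self hW
  have e01 := congrFun (congrFun hW 0) 1
  have e11 := congrFun (congrFun hW 1) 1
  simp only [Matrix.mul_apply, Fin.sum_univ_two, Matrix.conjTranspose_apply, RCLike.star_def,
    Matrix.one_apply_eq, Matrix.one_apply_ne zero_ne_one] at e01 e11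
  rw [div_eq_iff (left_ne_zero_of_mul_eq_one hdet), Matrix.det_fin_two, map_sub, _root_.map_mul,
    _root_.map_mul]
  linear_combination (starRingEnd ℂ) (W 0 1) * e01 - (starRingEnd ℂ) (W 0 0) * e11

lemma NevOn.div_of_bounded {Ω : Set ℂ} {f g : ℂ → ℂ} {C : ℝ} (hC : 0 < C)
    (hf : DifferentiableOn ℂ f Ω) (hg : DifferentiableOn ℂ g Ω)
    (hfC : ∀ z ∈ Ω, ‖f z‖ ≤ C) (hgC : ∀ z ∈ Ω, ‖g z‖ ≤ C) (hg₀ : ∃ z ∈ Ω, g z ≠ 0) :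
    NevOn Ω (fun z => f z / g z) := by
  have hC' : (C : ℂ) ≠ 0 := Complex.ofReal_ne_zero.2 hC.ne'
  have hscale : ∀ h : ℂ → ℂ, (∀ z ∈ Ω, ‖h z‖ ≤ C) → ∀ z ∈ Ω, ‖h z / C‖ ≤ 1 := fun h hh z hz => by
    rw [norm_div, Complex.norm_real, Real.norm_of_nonneg hC.le, div_le_one hC]
    exact hh z hz
  refine ⟨fun z => f z / C, fun z => g z / C, hf.div_const _, hg.div_const _,
    hscale f hfC, hscale g hgC, ?_, fun z _ _ => ?_⟩
  · obtain ⟨z, hz, hgz⟩ := hg₀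
    exact ⟨z, hz, div_ne_zero hgz hC'⟩
  · simp only [div_div_div_cancel_right₀ hC']

/-- Otherwise `{0}` would be the open set `U ∩ g ⁻¹' {0}ᶜ`. -/
lemma IsOpen.exists_ne_zero_apply_ne_zero {U : Set ℂ} (hU : IsOpen U) {g : ℂ → ℂ}
    (hg : ContinuousOn g U) (h : ∃ z ∈ U, g z ≠ 0) : ∃ z ∈ U, z ≠ 0 ∧ g z ≠ 0 := by
  by_contra! hcon
  obtain ⟨z₀, hz₀, hgz₀⟩ := h
  have hV : IsOpen (U ∩ g ⁻¹' {0}ᶜ) := hg.isOpen_inter_preimage hU isOpen_compl_singleton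
  have hV0 : U ∩ g ⁻¹' {0}ᶜ = {0} := by
    refine Set.eq_singleton_iff_nonempty_unique_mem.2 ⟨⟨z₀, hz₀, hgz₀⟩, ?_⟩
    rintro z ⟨hz, hgz⟩
    by_contra hz0
    exact hgz (hcon z hz hz0)
  exact not_isOpen_singleton (0 : ℂ) (hV0 ▸ hV)

theorem statement2_general (S : ℂ → Matrix (Fin 2) (Fin 2) ℂ) (γ : Set ℝ)
    (hS : ∀ i j, SchurFn fun z => S z i j)
    (hdet : ∃ z ∈ unitDisk, (S z).det ≠ 0)
    (huni : UnitaryAEOn S γ) :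
    NevOn extDisk (fun ζ => (starRingEnd ℂ) (S (1 / (starRingEnd ℂ) ζ) 0 0) /
      (starRingEnd ℂ) ((S (1 / (starRingEnd ℂ) ζ)).det)) ∧
    (∀ᵐ θ ∂(volume.restrict γ), ∃ w : ℂ, RadLim (fun z => S z 1 1) θ w ∧
      RadLimExt (fun ζ => (starRingEnd ℂ) (S (1 / (starRingEnd ℂ) ζ) 0 0) /
        (starRingEnd ℂ) ((S (1 / (starRingEnd ℂ) ζ)).det)) θ w) := by
  have hdetDiff : DifferentiableOn ℂ (fun z => (S z).det) unitDisk := by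
    simp only [Matrix.det_fin_two]
    exact ((hS 0 0).1.mul (hS 1 1).1).sub ((hS 0 1).1.mul (hS 1 0).1)
  have hdetBound : ∀ z ∈ unitDisk, ‖(S z).det‖ ≤ 2 := fun z hz =>
    norm_det_fin_two_le fun i j => (hS i j).2 z hz
  obtain ⟨z₁, hz₁, hz₁0, hdetz₁⟩ :=
    isOpen_unitDisk.exists_ne_zero_apply_ne_zero hdetDiff.continuousOn hdet
  constructor
  · refine NevOn.div_of_bounded two_pos (hS 0 0).1.circleReflect hdetDiff.circleReflect
      (fun ζ hζ => (norm_circleReflect_le (hS 0 0).2 hζ).trans one_le_two)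
      (fun ζ hζ => norm_circleReflect_le hdetBound hζ)
      ⟨_, one_div_conj_mem_extDisk hz₁ hz₁0, ?_⟩
    simpa using hdetz₁
  · filter_upwards [huni] with θ ⟨W, hW, hWu⟩
    refine ⟨W 1 1, hW 1 1, ?_⟩
    rw [← Matrix.conj_div_conj_det_of_conjTranspose_mul_self hWu]
    exact (hW 0 0).circleReflect.div (RadLim.det hW).circleReflect
      (left_ne_zero_of_mul_eq_one (Matrix.conj_det_mul_det_of_conjTranspose_mul_self hWu))

/-- a 2×2 matrix function `S` with Schur entries, `det S ≢ 0`, unitary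
a.e. on the arc `γ`, has `s₂₂` pseudocontinuable across `γ`, the pseudocontinuation
being `ζ ↦ conj (s₁₁(1/conj ζ)) / conj (det S(1/conj ζ))`. -/
theorem statement2 (S : ℂ → Matrix (Fin 2) (Fin 2) ℂ) (γ : Set ℝ) (hγ : IsArc γ)
    (hS : ∀ i j, SchurFn fun z => S z i j)
    (hdet : ∃ z ∈ unitDisk, (S z).det ≠ 0)
    (huni : UnitaryAEOn S γ) :
    NevOn extDisk (fun ζ => (starRingEnd ℂ) (S (1 / (starRingEnd ℂ) ζ) 0 0) /
      (starRingEnd ℂ) ((S (1 / (starRingEnd ℂ) ζ)).det)) ∧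
    (∀ᵐ θ ∂(volume.restrict γ), ∃ w : ℂ, RadLim (fun z => S z 1 1) θ w ∧
      RadLimExt (fun ζ => (starRingEnd ℂ) (S (1 / (starRingEnd ℂ) ζ) 0 0) /
        (starRingEnd ℂ) ((S (1 / (starRingEnd ℂ) ζ)).det)) θ w) :=
  statement2_general S γ hS hdet huni
end
end

section
/- Let 0 < ε < 1/3 and let s, r, s₁₁, s₁₂, s₂₁ be complex numbers with |s| ≤ 1, |s₁₁| ≤ 1, |s₂₁| ≤ 1, |r·s₁₂|² = ε²(1 − |s|²), |r|² ≤ ε²(1−|s|²) ≤ ε², and |s₁₁|² + |s₂₁|² ≤ 1, |s₂₁·conj(s) + |r|²·s₁₁·conj(s₁₂)| ≤ 2. Then the 2×2 matrix V with rows (r²s₁₁, r·s₁₂) and (r·s₂₁, s) satisfies I − V*V ≥ 0 (positive semidefinite). -/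
open MeasureTheory Filter Complex Set Matrix
open scoped ComplexOrder

noncomputable section

/-
Write `1 - VᴴV = !![a, star b; b, d]`. The entry `d` equals `(1 - ε²)(1 - |s|²)` by the
hypothesis on `|r s₁₂|`, the entry `a` is at least `1 - |r|² ≥ 1 - ε²` because
`|s₁₁|² + |s₂₁|² ≤ 1`, and `b = -r v` with `v = s₂₁ s̄ + |r|² s₁₁ s̄₁₂`, so
`|b|² ≤ 4|r|² ≤ 4ε²(1 - |s|²)`. Since `4ε² ≤ (1 - ε²)²` for `ε < 1/3`, this gives
`|b|² ≤ a d`, and a `2 × 2` Hermitian matrix with positive corner and nonnegative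
determinant is positive semidefinite.
-/

open ComplexConjugate

namespace Matrix

variable {𝕜 : Type*} [RCLike 𝕜]

theorem posSemidef_fin_two_of_norm_sq_le {a d : ℝ} {b : 𝕜} (ha : 0 < a)
    (hb : ‖b‖ ^ 2 ≤ a * d) : (!![(a : 𝕜), star b; b, (d : 𝕜)]).PosSemidef := by
  have ha' : (a : 𝕜) ≠ 0 := RCLike.ofReal_ne_zero.2 ha.ne'
  have hdecomp : !![(a : 𝕜), star b; b, (d : 𝕜)] =
      a⁻¹ • vecMulVec ![(a : 𝕜), b] (star ![(a : 𝕜), b]) +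
        diagonal ![0, ((d - ‖b‖ ^ 2 / a : ℝ) : 𝕜)] := by
    ext i j
    fin_cases i <;> fin_cases j <;>
      simp [vecMulVec, RCLike.real_smul_eq_coe_mul, RCLike.mul_conj] <;> field_simp
    ring
  rw [hdecomp]
  refine ((posSemidef_vecMulVec_self_star _).smul (inv_nonneg.2 ha.le)).add (.diagonal ?_)
  intro i
  fin_cases i
  · simp
  · exact RCLike.ofReal_nonneg.2 (sub_nonneg.2 ((div_le_iff₀ ha).2 (by linarith)))

theorem one_sub_conjTranspose_mul_self_fin_two (p q u v : 𝕜) :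
    1 - (!![p, q; u, v])ᴴ * !![p, q; u, v] =
      !![((1 - ‖p‖ ^ 2 - ‖u‖ ^ 2 : ℝ) : 𝕜), star (-(star q * p + star v * u));
        -(star q * p + star v * u), ((1 - ‖q‖ ^ 2 - ‖v‖ ^ 2 : ℝ) : 𝕜)] := by
  ext i j
  fin_cases i <;> fin_cases j <;> simp [mul_apply, Fin.sum_univ_two, ← RCLike.conj_mul] <;> ring

end Matrix

theorem statement15_general (ε : ℝ) (hε : 0 < ε) (hε' : ε < 1 / 3)
    (s r s₁₁ s₁₂ s₂₁ : ℂ)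
    (hr12 : ‖r * s₁₂‖ ^ 2 = ε ^ 2 * (1 - ‖s‖ ^ 2))
    (hr : ‖r‖ ^ 2 ≤ ε ^ 2 * (1 - ‖s‖ ^ 2))
    (hcol : ‖s₁₁‖ ^ 2 + ‖s₂₁‖ ^ 2 ≤ 1)
    (hv : ‖s₂₁ * (starRingEnd ℂ) s + ((‖r‖ ^ 2 : ℝ) : ℂ) * s₁₁ * (starRingEnd ℂ) s₁₂‖ ≤ 2) :
    ((1 : Matrix (Fin 2) (Fin 2) ℂ) -
      (!![r ^ 2 * s₁₁, r * s₁₂; r * s₂₁, s])ᴴ *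
        !![r ^ 2 * s₁₁, r * s₁₂; r * s₂₁, s]).PosSemidef := by
  set t := 1 - ‖s‖ ^ 2
  set v := s₂₁ * conj s + ((‖r‖ ^ 2 : ℝ) : ℂ) * s₁₁ * conj s₁₂
  have ht : 0 ≤ t := nonneg_of_mul_nonneg_right ((sq_nonneg _).trans hr) (by positivity)
  have hr_nonneg : 0 ≤ ‖r‖ ^ 2 := sq_nonneg _
  have hr_le : ‖r‖ ^ 2 ≤ ε ^ 2 := hr.trans (mul_le_of_le_one_right (sq_nonneg ε) (by simp [t]))
  have ha : 1 - ε ^ 2 ≤ 1 - ‖r ^ 2 * s₁₁‖ ^ 2 - ‖r * s₂₁‖ ^ 2 := by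
    rw [norm_mul, norm_mul, norm_pow]
    nlinarith [mul_le_mul_of_nonneg_left hcol hr_nonneg,
      mul_nonneg (mul_nonneg hr_nonneg (by nlinarith : 0 ≤ 1 - ‖r‖ ^ 2)) (sq_nonneg ‖s₁₁‖)]
  have hd : 1 - ‖r * s₁₂‖ ^ 2 - ‖s‖ ^ 2 = (1 - ε ^ 2) * t := by rw [hr12]; ring
  have hb : -(star (r * s₁₂) * (r ^ 2 * s₁₁) + star s * (r * s₂₁)) = -(r * v) := by
    simp only [v, Complex.ofReal_pow, ← Complex.mul_conj', Complex.star_def, map_mul]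
    ring
  have hb_sq : ‖-(r * v)‖ ^ 2 ≤ 4 * ε ^ 2 * t := by
    have hv_sq : ‖v‖ ^ 2 ≤ 4 := by nlinarith [norm_nonneg v]
    rw [norm_neg, norm_mul, mul_pow]
    nlinarith
  have hdet : ‖-(r * v)‖ ^ 2 ≤ (1 - ‖r ^ 2 * s₁₁‖ ^ 2 - ‖r * s₂₁‖ ^ 2) * ((1 - ε ^ 2) * t) :=
    calc ‖-(r * v)‖ ^ 2 ≤ 4 * ε ^ 2 * t := hb_sq
      _ ≤ (1 - ε ^ 2) * ((1 - ε ^ 2) * t) := by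
        nlinarith [mul_le_mul_of_nonneg_right (by nlinarith : 4 * ε ^ 2 ≤ (1 - ε ^ 2) ^ 2) ht]
      _ ≤ _ := mul_le_mul_of_nonneg_right ha (mul_nonneg (by nlinarith) ht)
  rw [Matrix.one_sub_conjTranspose_mul_self_fin_two, hd, hb]
  exact Matrix.posSemidef_fin_two_of_norm_sq_le (by nlinarith) hdet

/-- the pointwise contractivity estimate on `γ' = 𝕋 \ γ` used in the
proof of Theorem 2. -/
theorem statement15 (ε : ℝ) (hε : 0 < ε) (hε' : ε < 1 / 3)
    (s r s₁₁ s₁₂ s₂₁ : ℂ)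
    (hs : ‖s‖ ≤ 1) (h11 : ‖s₁₁‖ ≤ 1) (h21 : ‖s₂₁‖ ≤ 1)
    (hr12 : ‖r * s₁₂‖ ^ 2 = ε ^ 2 * (1 - ‖s‖ ^ 2))
    (hr : ‖r‖ ^ 2 ≤ ε ^ 2 * (1 - ‖s‖ ^ 2))
    (hr2 : ε ^ 2 * (1 - ‖s‖ ^ 2) ≤ ε ^ 2)
    (hcol : ‖s₁₁‖ ^ 2 + ‖s₂₁‖ ^ 2 ≤ 1)
    (hv : ‖s₂₁ * (starRingEnd ℂ) s + ((‖r‖ ^ 2 : ℝ) : ℂ) * s₁₁ * (starRingEnd ℂ) s₁₂‖ ≤ 2) :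
    ((1 : Matrix (Fin 2) (Fin 2) ℂ) -
      (!![r ^ 2 * s₁₁, r * s₁₂; r * s₂₁, s])ᴴ *
        !![r ^ 2 * s₁₁, r * s₁₂; r * s₂₁, s]).PosSemidef :=
  statement15_general ε hε hε' s r s₁₁ s₁₂ s₂₁ hr12 hr hcol hv
end
end
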